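/- Let (X, m) be a probability space with a measure-preserving action of ℤⁿ, and let (C_k) be a sequence of measurable sets with m(C_k) = c > 0 for all k, such that for every fixed z ∈ ℤⁿ we have m(T^z C_k Δ C_k) → 0 as k → ∞. Assume the action is ergodic. Then for every integrable function f : X → ℝ, ∫_{C_k} f dm → c · ∫_X f dm as k → ∞. -/

import Mathlib

open MeasureTheory Filter
open scoped symmDiff

/-- The cube `Q_N = {z ∈ ℤⁿ : 1 ≤ z_i ≤ N}`. -/
noncomputable def cube (n N : ℕ) : Finset (Fin n → ℤ) := Finset.Icc 1 (fun _ => (N : ℤ))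

/-!
The functionals `f ↦ ∫_{C_k} f` are uniformly `1`-Lipschitz for every `L^p` norm with `p ≥ 1`, so
the functions with `∫_{C_k} f → c ∫ f` form a closed subspace, and since simple functions are
dense in `L¹` it suffices to check the convergence on a dense subset of `L²`. Constants converge
because `m(C_k) = c`. A coboundary `h ∘ T^z - h` has integral `0`, and its integral over `C_k` is
`∫_{T^z C_k} h - ∫_{C_k} h`, which tends to `0` because `m(T^z C_k ∆ C_k) → 0`. Constants and
coboundaries span a dense subspace of `L²`: a function orthogonal to all coboundaries is fixed by
the isometries `h ↦ h ∘ T^z`, hence constant by ergodicity, and being orthogonal to `1` it vanishes.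
-/

open Topology InnerProductSpace

section SetIntegralTendsto

variable {X : Type*} [MeasurableSpace X] {μ : Measure X} {C : ℕ → Set X} {c : ℝ}

def SetIntegralTendsto (μ : Measure X) (C : ℕ → Set X) (c : ℝ) (f : X → ℝ) : Prop :=
  Tendsto (fun k => ∫ x in C k, f x ∂μ) atTop (𝓝 (c * ∫ x, f x ∂μ))

lemma SetIntegralTendsto.congr_ae {f g : X → ℝ} (hf : SetIntegralTendsto μ C c f)
    (hfg : f =ᵐ[μ] g) : SetIntegralTendsto μ C c g := by
  have hset : ∀ k, ∫ x in C k, g x ∂μ = ∫ x in C k, f x ∂μ := fun k =>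
    integral_congr_ae (ae_restrict_of_ae hfg.symm)
  simpa only [SetIntegralTendsto, hset, integral_congr_ae hfg] using hf

lemma SetIntegralTendsto.add {f g : X → ℝ} (hf : SetIntegralTendsto μ C c f)
    (hg : SetIntegralTendsto μ C c g) (hfi : Integrable f μ) (hgi : Integrable g μ) :
    SetIntegralTendsto μ C c (f + g) := by
  simpa only [SetIntegralTendsto, Pi.add_apply, integral_add hfi.integrableOn hgi.integrableOn,
    integral_add hfi hgi, mul_add] using Tendsto.add hf hg

lemma SetIntegralTendsto.const_mul {f : X → ℝ} (hf : SetIntegralTendsto μ C c f) (r : ℝ) :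
    SetIntegralTendsto μ C c (fun x => r * f x) := by
  simpa only [SetIntegralTendsto, integral_const_mul, mul_left_comm c r] using
    Tendsto.const_mul r hf

lemma setIntegralTendsto_one [IsProbabilityMeasure μ] (hc : 0 ≤ c)
    (hC : ∀ k, μ (C k) = ENNReal.ofReal c) : SetIntegralTendsto μ C c (fun _ => 1) := by
  simp [SetIntegralTendsto, measureReal_def, hC, hc]

lemma tendsto_setIntegral_sub_of_tendsto_measure_symmDiff {ι : Type*} {l : Filter ι}
    {A B : ι → Set X} (hA : ∀ i, MeasurableSet (A i)) (hB : ∀ i, MeasurableSet (B i))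
    (hAB : Tendsto (fun i => μ (A i ∆ B i)) l (𝓝 0)) {h : X → ℝ} (hh : Integrable h μ) :
    Tendsto (fun i => ∫ x in A i, h x ∂μ - ∫ x in B i, h x ∂μ) l (𝓝 0) := by
  have hsplit : ∀ i, ∫ x in A i, h x ∂μ - ∫ x in B i, h x ∂μ
      = ∫ x in A i \ B i, h x ∂μ - ∫ x in B i \ A i, h x ∂μ := fun i => by
    rw [← integral_inter_add_sdiff (hB i) hh.integrableOn,
      ← integral_inter_add_sdiff (hA i) hh.integrableOn (s := B i), Set.inter_comm]
    ring
  have hsmall : ∀ D : ι → Set X, (∀ i, D i ⊆ A i ∆ B i) →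
      Tendsto (fun i => ∫ x in D i, h x ∂μ) l (𝓝 0) := fun D hD =>
    hh.tendsto_setIntegral_nhds_zero <| tendsto_of_tendsto_of_tendsto_of_le_of_le
      tendsto_const_nhds hAB (fun _ => zero_le) fun i => measure_mono (hD i)
  simpa only [hsplit, sub_zero] using
    (hsmall _ fun _ => le_sup_left).sub (hsmall _ fun _ => le_sup_right)

lemma setIntegralTendsto_comp_sub (e : X ≃ᵐ X) (he : MeasurePreserving e μ μ)
    (hC : ∀ k, MeasurableSet (C k)) (hCe : Tendsto (fun k => μ ((e '' C k) ∆ C k)) atTop (𝓝 0))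
    {h : X → ℝ} (hh : Integrable h μ) : SetIntegralTendsto μ C c (fun x => h (e x) - h x) := by
  have hhe : Integrable (fun x => h (e x)) μ := (he.integrable_comp_emb e.measurableEmbedding).2 hh
  have hset : ∀ k, ∫ x in C k, (h (e x) - h x) ∂μ
      = ∫ x in e '' C k, h x ∂μ - ∫ x in C k, h x ∂μ := fun k => by
    rw [integral_sub hhe.integrableOn hh.integrableOn,
      he.setIntegral_image_emb e.measurableEmbedding]
  have hzero : ∫ x, (h (e x) - h x) ∂μ = 0 := by
    rw [integral_sub hhe hh, he.integral_comp' h, sub_self]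
  simpa only [SetIntegralTendsto, hset, hzero, mul_zero] using
    tendsto_setIntegral_sub_of_tendsto_measure_symmDiff
      (fun k => e.measurableSet_image.2 (hC k)) hC hCe hh

end SetIntegralTendsto

section Lp

open scoped ENNReal

variable {X : Type*} [MeasurableSpace X] {μ : Measure X} {C : ℕ → Set X} {c : ℝ}
  {p : ℝ≥0∞} [Fact (1 ≤ p)]

lemma MeasureTheory.Lp.integral_norm_le_norm {E : Type*} [NormedAddCommGroup E]
    [IsProbabilityMeasure μ] (w : Lp E p μ) : ∫ x, ‖w x‖ ∂μ ≤ ‖w‖ := by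
  rw [integral_norm_eq_lintegral_enorm (Lp.aestronglyMeasurable w),
    ← eLpNorm_one_eq_lintegral_enorm, Lp.norm_def]
  exact ENNReal.toReal_mono (Lp.eLpNorm_ne_top w)
    (eLpNorm_le_eLpNorm_of_exponent_le Fact.out (Lp.aestronglyMeasurable w))

lemma lipschitzWith_setIntegral_Lp [IsProbabilityMeasure μ] (s : Set X) :
    LipschitzWith 1 fun w : Lp ℝ p μ => ∫ x in s, w x ∂μ := by
  refine LipschitzWith.of_dist_le_mul fun v w => ?_
  have hint : ∀ u : Lp ℝ p μ, Integrable u μ := fun u => (Lp.memLp u).integrable Fact.out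
  calc dist (∫ x in s, v x ∂μ) (∫ x in s, w x ∂μ) = ‖∫ x in s, (v - w) x ∂μ‖ := by
        rw [Real.dist_eq, ← integral_sub (hint v).integrableOn (hint w).integrableOn,
          integral_congr_ae (ae_restrict_of_ae (Lp.coeFn_sub v w))]
        rfl
    _ ≤ ∫ x in s, ‖(v - w) x‖ ∂μ := norm_integral_le_integral_norm _
    _ ≤ ∫ x, ‖(v - w) x‖ ∂μ :=
      setIntegral_le_integral (hint _).norm (Eventually.of_forall fun _ => norm_nonneg _)
    _ ≤ ‖v - w‖ := Lp.integral_norm_le_norm _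
    _ = 1 * dist v w := by rw [one_mul, dist_eq_norm]

variable (μ C c p) in
def setIntegralTendstoSubmodule [IsFiniteMeasure μ] : Submodule ℝ (Lp ℝ p μ) where
  carrier := {w | SetIntegralTendsto μ C c w}
  zero_mem' := by
    refine SetIntegralTendsto.congr_ae ?_ (Lp.coeFn_zero ℝ p μ).symm
    simp [SetIntegralTendsto]
  add_mem' {v w} hv hw := by
    have hint : ∀ u : Lp ℝ p μ, Integrable u μ := fun u => (Lp.memLp u).integrable Fact.out
    exact (hv.add hw (hint v) (hint w)).congr_ae (Lp.coeFn_add v w).symm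
  smul_mem' r w hw := (hw.const_mul r).congr_ae (Lp.coeFn_smul r w).symm

lemma isClosed_setIntegralTendstoSubmodule [IsProbabilityMeasure μ] :
    IsClosed (setIntegralTendstoSubmodule μ C c p : Set (Lp ℝ p μ)) := by
  have hcont : Continuous fun w : Lp ℝ p μ => ∫ x, w x ∂μ := by
    simpa using (lipschitzWith_setIntegral_Lp (p := p) (μ := μ) Set.univ).continuous
  exact (LipschitzWith.uniformEquicontinuous _ 1 fun k => lipschitzWith_setIntegral_Lp (C k))
    |>.equicontinuous.isClosed_setOfPred_tendsto (hcont.const_mul c)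

lemma SetIntegralTendsto.of_forall_Lp_two [IsProbabilityMeasure μ]
    (h : ∀ w : Lp ℝ 2 μ, SetIntegralTendsto μ C c w) {f : X → ℝ} (hf : Integrable f μ) :
    SetIntegralTendsto μ C c f := by
  have hsimple : (Lp.simpleFunc ℝ 1 μ : Set (Lp ℝ 1 μ)) ⊆ setIntegralTendstoSubmodule μ C c 1 :=
    fun w hw => by
      let s := Lp.simpleFunc.toSimpleFunc (⟨w, hw⟩ : Lp.simpleFunc ℝ 1 μ)
      have hs : MemLp s 2 μ := s.memLp_of_isFiniteMeasure 2 μ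
      exact ((h (hs.toLp s)).congr_ae hs.coeFn_toLp).congr_ae
        (Lp.simpleFunc.toSimpleFunc_eq_toFun _)
  have hall := closure_minimal hsimple isClosed_setIntegralTendstoSubmodule
  rw [(Lp.simpleFunc.dense ENNReal.one_ne_top).closure_eq] at hall
  exact (hall (Set.mem_univ (hf.toL1 f))).congr_ae hf.coeFn_toL1

end Lp

section Action

variable {X G : Type*} [AddGroup G] {T : G → X → X}

lemma apply_neg_apply (hact : ∀ g h x, T (g + h) x = T g (T h x)) (hid : ∀ x, T 0 x = x)
    (g : G) (x : X) : T (-g) (T g x) = x := by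
  rw [← hact, neg_add_cancel, hid]

variable [MeasurableSpace X] {μ : Measure X}

def measurableEquivOfAction (hT : ∀ g, Measurable (T g))
    (hact : ∀ g h x, T (g + h) x = T g (T h x)) (hid : ∀ x, T 0 x = x) (g : G) : X ≃ᵐ X where
  toFun := T g
  invFun := T (-g)
  left_inv := apply_neg_apply hact hid g
  right_inv x := by simpa using apply_neg_apply hact hid (-g) x
  measurable_toFun := hT g
  measurable_invFun := hT (-g)

lemma measure_eq_zero_or_one_of_forall_preimage_ae_eq [Countable G] (hT : ∀ g, Measurable (T g))
    (hact : ∀ g h x, T (g + h) x = T g (T h x)) (hid : ∀ x, T 0 x = x)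
    (herg : ∀ S : Set X, MeasurableSet S → (∀ g, T g ⁻¹' S = S) → μ S = 0 ∨ μ S = 1)
    {S : Set X} (hS : MeasurableSet S) (hSinv : ∀ g, T g ⁻¹' S =ᵐ[μ] S) :
    μ S = 0 ∨ μ S = 1 := by
  set U := ⋃ g, T g ⁻¹' S
  have hUinv : ∀ g, T g ⁻¹' U = U := fun g => by
    ext x
    simp only [U, Set.mem_iUnion, Set.mem_preimage]
    refine ⟨fun ⟨h, hx⟩ => ⟨h + g, by rwa [hact]⟩, fun ⟨h, hx⟩ => ⟨h - g, ?_⟩⟩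
    rwa [← hact, sub_add_cancel]
  have hSU : S ⊆ U := fun x hx => Set.mem_iUnion.2 ⟨0, by rwa [Set.mem_preimage, hid]⟩
  have hUS : μ (U \ S) = 0 := by
    refine measure_mono_null (fun x ⟨hxU, hxS⟩ => ?_)
      (measure_iUnion_null fun g => (ae_eq_set.1 (hSinv g)).1)
    obtain ⟨g, hg⟩ := Set.mem_iUnion.1 hxU
    exact Set.mem_iUnion.2 ⟨g, hg, hxS⟩
  rw [← measure_congr (ae_eq_set.2 ⟨hUS, by simp [Set.sdiff_eq_empty.2 hSU]⟩)]
  exact herg U (MeasurableSet.iUnion fun g => hT g hS) hUinv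

lemma exists_ae_eq_const_of_forall_comp_ae_eq [Countable G] [IsProbabilityMeasure μ]
    (hT : ∀ g, Measurable (T g))
    (hact : ∀ g h x, T (g + h) x = T g (T h x)) (hid : ∀ x, T 0 x = x)
    (herg : ∀ S : Set X, MeasurableSet S → (∀ g, T g ⁻¹' S = S) → μ S = 0 ∨ μ S = 1)
    {φ : X → ℝ} (hφ : Measurable φ) (hφinv : ∀ g, φ ∘ T g =ᵐ[μ] φ) :
    ∃ b : ℝ, φ =ᵐ[μ] fun _ => b := by
  refine exists_eventuallyEq_const_of_forall_separating MeasurableSet fun V hV => ?_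
  have hinv : ∀ g, T g ⁻¹' (φ ⁻¹' V) =ᵐ[μ] φ ⁻¹' V := fun g =>
    ((hφinv g).mono fun x hx => by simp only [Set.mem_preimage, ← hx]; rfl).set_eq
  rcases measure_eq_zero_or_one_of_forall_preimage_ae_eq hT hact hid herg (hφ hV) hinv with h | h
  · exact Or.inr (measure_eq_zero_iff_ae_notMem.1 h)
  · exact Or.inl (mem_ae_iff.2 ((prob_compl_eq_zero_iff (hφ hV)).2 h))

end Action

lemma eq_of_norm_eq_of_inner_sub_eq_zero {E : Type*} [NormedAddCommGroup E]
    [InnerProductSpace ℝ E] {u v : E} (hnorm : ‖u‖ = ‖v‖) (horth : ⟪u - v, v⟫_ℝ = 0) : u = v := by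
  rw [inner_sub_left, sub_eq_zero, real_inner_self_eq_norm_sq] at horth
  rw [← sub_eq_zero, ← norm_eq_zero, ← sq_eq_zero_iff (M₀ := ℝ), norm_sub_sq_real, hnorm, horth]
  ring

section Coboundaries

variable {X G : Type*} [MeasurableSpace X] {μ : Measure X} [AddGroup G] {T : G → X → X}

def coboundaries (hT : ∀ g, MeasurePreserving (T g) μ μ) : Set (Lp ℝ 2 μ) :=
  {w | ∃ (g : G) (v : Lp ℝ 2 μ), w = Lp.compMeasurePreserving (T g) (hT g) v - v}

lemma coboundaries_subset_setIntegralTendstoSubmodule [IsFiniteMeasure μ] {C : ℕ → Set X} {c : ℝ}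
    (hT : ∀ g, MeasurePreserving (T g) μ μ)
    (hact : ∀ g h x, T (g + h) x = T g (T h x)) (hid : ∀ x, T 0 x = x)
    (hC : ∀ k, MeasurableSet (C k))
    (hCinv : ∀ g, Tendsto (fun k => μ ((T g '' C k) ∆ C k)) atTop (𝓝 0)) :
    coboundaries hT ⊆ setIntegralTendstoSubmodule μ C c 2 := by
  rintro _ ⟨g, v, rfl⟩
  refine (setIntegralTendsto_comp_sub (measurableEquivOfAction (fun g => (hT g).measurable)
    hact hid g) (hT g) hC (hCinv g) ((Lp.memLp v).integrable one_le_two)).congr_ae ?_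
  filter_upwards [Lp.coeFn_sub (Lp.compMeasurePreserving (T g) (hT g) v) v,
    Lp.coeFn_compMeasurePreserving v (hT g)] with x hsub hcomp
  rw [hsub, Pi.sub_apply, hcomp]
  rfl

lemma span_const_coboundaries_dense [IsProbabilityMeasure μ] [Countable G]
    (hT : ∀ g, MeasurePreserving (T g) μ μ)
    (hact : ∀ g h x, T (g + h) x = T g (T h x)) (hid : ∀ x, T 0 x = x)
    (herg : ∀ S : Set X, MeasurableSet S → (∀ g, T g ⁻¹' S = S) → μ S = 0 ∨ μ S = 1) :
    (Submodule.span ℝ (insert (Lp.const 2 μ 1) (coboundaries hT))).topologicalClosure = ⊤ := by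
  rw [Submodule.topologicalClosure_eq_top_iff, Submodule.eq_bot_iff]
  intro φ hφ
  have horth := fun w hw => (Submodule.mem_orthogonal _ φ).1 hφ w (Submodule.subset_span hw)
  have hfix : ∀ g, Lp.compMeasurePreserving (T g) (hT g) φ = φ := fun g =>
    eq_of_norm_eq_of_inner_sub_eq_zero (Lp.norm_compMeasurePreserving φ (hT g))
      (horth _ (Or.inr ⟨g, φ, rfl⟩))
  obtain ⟨b, hb⟩ := exists_ae_eq_const_of_forall_comp_ae_eq (fun g => (hT g).measurable) hact hid
    herg (Lp.stronglyMeasurable φ).measurable fun g => by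
      simpa only [hfix g] using (Lp.coeFn_compMeasurePreserving φ (hT g)).symm
  have hconst : φ = b • Lp.const 2 μ (1 : ℝ) := by
    refine Lp.ext (hb.trans ?_)
    filter_upwards [Lp.coeFn_smul b (Lp.const 2 μ (1 : ℝ))] with x hsmul
    simp [hsmul]
  rw [← inner_self_eq_zero (𝕜 := ℝ)]
  nth_rewrite 1 [hconst]
  rw [real_inner_smul_left, horth _ (Set.mem_insert _ _), mul_zero]

end Coboundaries

theorem stmt_0 {X : Type*} [MeasurableSpace X] (m : Measure X) [IsProbabilityMeasure m]
    (n : ℕ) (T : (Fin n → ℤ) → X → X)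
    (hmp : ∀ z, MeasurePreserving (T z) m m)
    (hact : ∀ z w x, T (z + w) x = T z (T w x)) (hid : ∀ x, T 0 x = x)
    (herg : ∀ S : Set X, MeasurableSet S → (∀ z, T z ⁻¹' S = S) → m S = 0 ∨ m S = 1)
    (C : ℕ → Set X) (hCmeas : ∀ k, MeasurableSet (C k))
    (c : ℝ) (hc : 0 < c) (hCc : ∀ k, m (C k) = ENNReal.ofReal c)
    (hinv : ∀ z : Fin n → ℤ,
      Tendsto (fun k => m ((T z '' C k) ∆ (C k))) atTop (nhds 0))
    (f : X → ℝ) (hf : Integrable f m) :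
    Tendsto (fun k => ∫ x in C k, f x ∂m) atTop (nhds (c * ∫ x, f x ∂m)) := by
  have hgen : insert (Lp.const 2 m 1) (coboundaries hmp) ⊆ setIntegralTendstoSubmodule m C c 2 :=
    Set.insert_subset ((setIntegralTendsto_one hc.le hCc).congr_ae (Lp.coeFn_const ..).symm)
      (coboundaries_subset_setIntegralTendstoSubmodule hmp hact hid hCmeas hinv)
  have hL2 := (Submodule.span ℝ _).topologicalClosure_minimal (Submodule.span_le.2 hgen)
    isClosed_setIntegralTendstoSubmodule
  rw [span_const_coboundaries_dense hmp hact hid herg] at hL2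
  exact SetIntegralTendsto.of_forall_Lp_two (fun w => hL2 Submodule.mem_top) hf
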